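/- Let X be a square-integrable real random variable, R a real number, and b a real number with b < R and P(X < b) > 0. Define Y = |X - b| + b. Then E[(Y - R)²] < E[(X - R)²]. -/

import Mathlib

/-!
Where `X < b`, flooding replaces `X` by its mirror image `2 * b - X`, which is closer to `R > b`:
`(x - R) ^ 2 - (2 * b - x - R) ^ 2 = 4 * (b - x) * (R - b) > 0`; elsewhere it leaves `X` unchanged.
So the squared error decreases pointwise, strictly on `{X < b}`, which has positive measure.
-/

open MeasureTheory

section StrictMono

variable {α : Type*} [MeasurableSpace α] {μ : Measure α} {f g : α → ℝ} {s : Set α}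

theorem integral_lt_integral_of_ae_le_of_forall_lt_on (hf : Integrable f μ) (hg : Integrable g μ)
    (hle : f ≤ᵐ[μ] g) (hs : 0 < μ s) (hlt : ∀ x ∈ s, f x < g x) :
    ∫ x, f x ∂μ < ∫ x, g x ∂μ := by
  have hsupp : s ⊆ Function.support fun x => g x - f x := fun x hx =>
    (sub_pos.mpr (hlt x hx)).ne'
  have hpos : 0 < ∫ x, g x - f x ∂μ := by
    rw [integral_pos_iff_support_of_nonneg_ae (hle.mono fun _ h => sub_nonneg.mpr h) (hg.sub hf)]
    exact hs.trans_le (measure_mono hsupp)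
  rw [integral_sub hg hf] at hpos
  linarith

end StrictMono

section Flooding

variable {b R : ℝ}

theorem sq_abs_sub_add_sub_le (hb : b ≤ R) (x : ℝ) : (|x - b| + b - R) ^ 2 ≤ (x - R) ^ 2 := by
  rcases le_or_gt b x with hx | hx
  · rw [abs_of_nonneg (sub_nonneg.mpr hx), sub_add_cancel]
  · rw [abs_of_neg (sub_neg.mpr hx)]
    nlinarith

theorem sq_abs_sub_add_sub_lt (hb : b < R) {x : ℝ} (hx : x < b) :
    (|x - b| + b - R) ^ 2 < (x - R) ^ 2 := by
  rw [abs_of_neg (sub_neg.mpr hx)]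
  nlinarith

end Flooding

theorem MeasureTheory.MemLp.abs_sub_add_sub {α : Type*} [MeasurableSpace α] {μ : Measure α}
    [IsFiniteMeasure μ] {X : α → ℝ} (hX : MemLp X 2 μ) (b R : ℝ) :
    MemLp (fun ω => |X ω - b| + b - R) 2 μ :=
  ((hX.sub (memLp_const b)).norm.add (memLp_const b)).sub (memLp_const R)

theorem flooding_mse_lt
    {Ω : Type*} [MeasurableSpace Ω] (μ : Measure Ω) [IsProbabilityMeasure μ]
    (X : Ω → ℝ) (hX : MemLp X 2 μ) (R b : ℝ) (hb : b < R)
    (hpos : 0 < μ {ω | X ω < b}) :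
    (∫ ω, ((|X ω - b| + b) - R) ^ 2 ∂μ) < ∫ ω, (X ω - R) ^ 2 ∂μ :=
  integral_lt_integral_of_ae_le_of_forall_lt_on (hX.abs_sub_add_sub b R).integrable_sq
    (hX.sub (memLp_const R)).integrable_sq
    (Filter.Eventually.of_forall fun ω => sq_abs_sub_add_sub_le hb.le (X ω)) hpos
    fun _ hω => sq_abs_sub_add_sub_lt hb hω
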